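/- arXiv:1605.08513 — 3 statements merged into one kernel-verified Lean document; each statement's English description precedes it below -/
import Mathlib

section
/- Fix η, ξ ∈ (0,1], P_max ≥ 0, e_max ≥ 0, E_max ≥ 0, δ₁, δ₂, g_max, V ≥ 0, and Γ with Γ_min ≤ Γ ≤ Γ_max where Γ_min = P_max/(ξη) + (ξ/η)δ₁g_max·V and Γ_max = (E_max - ξe_max)/η - (ξ/η)δ₂g_max·V, and assume ξe_max ≤ (1-η)E_max + P_max/ξ. Suppose a sequence E : ℕ → ℝ satisfies E(0) = 0 and E(t+1) = η·E(t) - P(t)/ξ + ξ·e(t), where 0 ≤ e(t) ≤ e_max for all t, and P(t) satisfies: P(t) = 0 if E(t) < Γ - (ξ/η)δ₁g_max·V; P(t) = P_max if E(t) > Γ + (ξ/η)δ₂g_max·V; and 0 ≤ P(t) ≤ P_max otherwise. Then 0 ≤ E(t) ≤ E_max for all t. -/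
theorem stmt_2
    (η ξ Emax Pmax emax δ₁ δ₂ gmax V Γ : ℝ)
    (hη : 0 < η) (hη1 : η ≤ 1) (hξ : 0 < ξ) (hξ1 : ξ ≤ 1)
    (hEmax : 0 ≤ Emax) (hPmax : 0 ≤ Pmax) (hemax : 0 ≤ emax)
    (hδ₁ : 0 ≤ δ₁) (hδ₂ : 0 ≤ δ₂) (hgmax : 0 ≤ gmax) (hV : 0 ≤ V)
    (hΓmin : Pmax / (ξ * η) + (ξ / η) * δ₁ * gmax * V ≤ Γ)
    (hΓmax : Γ ≤ (Emax - ξ * emax) / η - (ξ / η) * δ₂ * gmax * V)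
    (hcond : ξ * emax ≤ (1 - η) * Emax + Pmax / ξ)
    (E P e : ℕ → ℝ)
    (hE0 : E 0 = 0)
    (hdyn : ∀ t, E (t + 1) = η * E t - P t / ξ + ξ * e t)
    (he : ∀ t, 0 ≤ e t ∧ e t ≤ emax)
    (hPlow : ∀ t, E t < Γ - (ξ / η) * δ₁ * gmax * V → P t = 0)
    (hPhigh : ∀ t, E t > Γ + (ξ / η) * δ₂ * gmax * V → P t = Pmax)
    (hPmid : ∀ t, 0 ≤ P t ∧ P t ≤ Pmax) :
    ∀ t, 0 ≤ E t ∧ E t ≤ Emax := by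
  have key1 : Pmax / ξ + ξ * δ₁ * gmax * V ≤ η * Γ := by
    have h := mul_le_mul_of_nonneg_left hΓmin hη.le
    have heq : η * (Pmax / (ξ * η) + (ξ / η) * δ₁ * gmax * V)
        = Pmax / ξ + ξ * δ₁ * gmax * V := by
      field_simp
    rw [heq] at h
    exact h
  have key2 : η * Γ + ξ * δ₂ * gmax * V + ξ * emax ≤ Emax := by
    have h := mul_le_mul_of_nonneg_left hΓmax hη.le
    have heq : η * ((Emax - ξ * emax) / η - (ξ / η) * δ₂ * gmax * V)
        = Emax - ξ * emax - ξ * δ₂ * gmax * V := by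
      field_simp
    rw [heq] at h
    linarith
  have hterm1 : 0 ≤ (ξ / η) * δ₁ * gmax * V := by positivity
  have hterm2 : 0 ≤ (ξ / η) * δ₂ * gmax * V := by positivity
  have hterm3 : 0 ≤ ξ * δ₁ * gmax * V := by positivity
  have hterm4 : 0 ≤ ξ * δ₂ * gmax * V := by positivity
  have hcond' : ξ * emax ≤ Emax - η * Emax + Pmax / ξ := by
    linear_combination hcond
  intro t
  induction t with
  | zero => rw [hE0]; exact ⟨le_refl 0, hEmax⟩
  | succ t ih =>
    obtain ⟨ih0, ih1⟩ := ih
    obtain ⟨he0, he1⟩ := he t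
    obtain ⟨hP0, hP1⟩ := hPmid t
    have hPd0 : 0 ≤ P t / ξ := div_nonneg hP0 hξ.le
    have hPd1 : P t / ξ ≤ Pmax / ξ := by gcongr
    have hPdmax : 0 ≤ Pmax / ξ := div_nonneg hPmax hξ.le
    have he0' : 0 ≤ ξ * e t := mul_nonneg hξ.le he0
    have he1' : ξ * e t ≤ ξ * emax := mul_le_mul_of_nonneg_left he1 hξ.le
    have hEη0 : 0 ≤ η * E t := mul_nonneg hη.le ih0
    have hEη1 : η * E t ≤ η * Emax := mul_le_mul_of_nonneg_left ih1 hη.le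
    rw [hdyn t]
    by_cases hlow : E t < Γ - (ξ / η) * δ₁ * gmax * V
    · rw [hPlow t hlow]
      have hz : (0:ℝ) / ξ = 0 := zero_div ξ
      rw [hz]
      have hEΓ : E t ≤ Γ := by linarith
      have hmΓ : η * E t ≤ η * Γ := mul_le_mul_of_nonneg_left hEΓ hη.le
      constructor
      · linarith
      · linarith
    · by_cases hhigh : E t > Γ + (ξ / η) * δ₂ * gmax * V
      · rw [hPhigh t hhigh]
        have hEΓ : Γ ≤ E t := by linarith
        have hmΓ : η * Γ ≤ η * E t := mul_le_mul_of_nonneg_left hEΓ hη.le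
        constructor
        · linarith
        · linarith
      · push_neg at hlow hhigh
        have hlo := mul_le_mul_of_nonneg_left hlow hη.le
        have hhi := mul_le_mul_of_nonneg_left hhigh hη.le
        have heqA : η * (Γ - (ξ / η) * δ₁ * gmax * V)
            = η * Γ - ξ * δ₁ * gmax * V := by field_simp
        have heqB : η * (Γ + (ξ / η) * δ₂ * gmax * V)
            = η * Γ + ξ * δ₂ * gmax * V := by field_simp
        rw [heqA] at hlo
        rw [heqB] at hhi
        constructor
        · linarith
        · linarith
end

section
/- Let η ∈ (0,1], ξ ∈ (0,1], and suppose E(t) ∈ [Γ - (ξ/η)δ₁g_max·V, Γ + (ξ/η)δ₂g_max·V] with Γ ≥ Γ_min = P_max/(ξη) + (ξ/η)δ₁g_max·V and Γ ≤ Γ_max = (E_max - ξe_max)/η - (ξ/η)δ₂g_max·V. If 0 ≤ P(t) ≤ P_max and 0 ≤ e(t) ≤ e_max, then E(t+1) = η·E(t) - P(t)/ξ + ξ·e(t) satisfies 0 ≤ E(t+1) ≤ E_max. -/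
theorem stmt_14
    (η ξ Emax Pmax emax δ₁ δ₂ gmax V Γ E P e : ℝ)
    (hη : 0 < η) (hη1 : η ≤ 1) (hξ : 0 < ξ) (hξ1 : ξ ≤ 1)
    (hδ₁ : 0 ≤ δ₁) (hδ₂ : 0 ≤ δ₂) (hgmax : 0 ≤ gmax) (hV : 0 ≤ V)
    (hΓmin : Pmax / (ξ * η) + (ξ / η) * δ₁ * gmax * V ≤ Γ)
    (hΓmax : Γ ≤ (Emax - ξ * emax) / η - (ξ / η) * δ₂ * gmax * V)
    (hE0 : Γ - (ξ / η) * δ₁ * gmax * V ≤ E)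
    (hE1 : E ≤ Γ + (ξ / η) * δ₂ * gmax * V)
    (hP0 : 0 ≤ P) (hP1 : P ≤ Pmax)
    (he0 : 0 ≤ e) (he1 : e ≤ emax) :
    0 ≤ η * E - P / ξ + ξ * e ∧ η * E - P / ξ + ξ * e ≤ Emax := by
  have hξη : 0 < ξ * η := mul_pos hξ hη
  have l1 : Pmax / ξ ≤ η * E := by
    calc Pmax / ξ = η * (Pmax / (ξ * η)) := by field_simp
    _ ≤ η * (Γ - (ξ / η) * δ₁ * gmax * V) := by
        apply mul_le_mul_of_nonneg_left _ hη.le; linarith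
    _ ≤ η * E := mul_le_mul_of_nonneg_left hE0 hη.le
  have u1 : η * E ≤ Emax - ξ * emax := by
    calc η * E ≤ η * (Γ + (ξ / η) * δ₂ * gmax * V) := mul_le_mul_of_nonneg_left hE1 hη.le
    _ ≤ η * ((Emax - ξ * emax) / η) := by
        apply mul_le_mul_of_nonneg_left _ hη.le; linarith
    _ = Emax - ξ * emax := by field_simp
  constructor
  · have : 0 ≤ ξ * e := mul_nonneg hξ.le he0
    have hPle' : P / ξ ≤ Pmax / ξ := by gcongr
    linarith
  · have hP' : 0 ≤ P / ξ := div_nonneg hP0 hξ.le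
    have he' : ξ * e ≤ ξ * emax := mul_le_mul_of_nonneg_left he1 hξ.le
    linarith
end

section
/- Let W ≥ 0, E, Γ, δ₁, g_max, V ∈ ℝ with W ≤ max(g_max·V - c, 0) for some c ≥ 0, and suppose μ : [0,∞) → ℝ satisfies 0 ≤ μ(P) - μ(0) ≤ δ₁·P for all P ≥ 0 (δ₁ ≥ 0). If E < Γ - (ξ/η)·δ₁·g_max·V (with ξ, η > 0), then for every P > 0: W·μ(P) + (η/ξ)·(E - Γ)·P < W·μ(0). Hence the maximizer over P ∈ [0, P_max] of G(P) = W·μ(P) + (η/ξ)(E - Γ)·P is P = 0. -/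
lemma mul_sub_lt_neg_of_lt_sub_div_mul {a b x y z : ℝ} (ha : 0 < a) (hb : 0 < b)
    (h : x < y - a / b * z) : b / a * (x - y) < -z := by
  have hxy : x - y < -(a / b * z) := by linarith
  calc b / a * (x - y) < b / a * -(a / b * z) := mul_lt_mul_of_pos_left hxy (by positivity)
    _ = -z := by field_simp

/-- Whatever the sign of `W`, the gain `W (μ P - μ 0)` is at most `B δ P` once `W ≤ B`, and a
price `r` below `-δ B` per unit of power outweighs it. -/
lemma mul_add_mul_lt_of_lt_neg_mul {μ : ℝ → ℝ} {W B δ r P : ℝ} (hWB : W ≤ B) (hB : 0 ≤ B)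
    (hμ : 0 ≤ μ P - μ 0 ∧ μ P - μ 0 ≤ δ * P) (hr : r < -(δ * B)) (hP : 0 < P) :
    W * μ P + r * P < W * μ 0 := by
  have hgain : W * (μ P - μ 0) ≤ B * (δ * P) := mul_le_mul hWB hμ.2 hμ.1 hB
  have hprice : r * P < -(δ * B) * P := mul_lt_mul_of_pos_right hr hP
  linarith

theorem stmt_16_general
    (W E Γ δ₁ gmax V ξ η c Pmax : ℝ)
    (hc : 0 ≤ c) (hWle : W ≤ max (gmax * V - c) 0)
    (hgmax : 0 ≤ gmax) (hV : 0 ≤ V)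
    (hξ : 0 < ξ) (hη : 0 < η)
    (μ : ℝ → ℝ)
    (hμ : ∀ P : ℝ, 0 ≤ P → 0 ≤ μ P - μ 0 ∧ μ P - μ 0 ≤ δ₁ * P)
    (hE : E < Γ - (ξ / η) * δ₁ * gmax * V) :
    (∀ P : ℝ, 0 < P → W * μ P + (η / ξ) * (E - Γ) * P < W * μ 0) ∧
    (∀ P : ℝ, 0 ≤ P → P ≤ Pmax →
      W * μ P + (η / ξ) * (E - Γ) * P ≤ W * μ 0 + (η / ξ) * (E - Γ) * 0) := by
  have hB : 0 ≤ gmax * V := mul_nonneg hgmax hV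
  have hWB : W ≤ gmax * V := hWle.trans (max_le (by linarith) hB)
  have hprice : η / ξ * (E - Γ) < -(δ₁ * (gmax * V)) :=
    mul_sub_lt_neg_of_lt_sub_div_mul hξ hη (by linarith)
  have hstrict : ∀ P : ℝ, 0 < P → W * μ P + (η / ξ) * (E - Γ) * P < W * μ 0 :=
    fun P hP => mul_add_mul_lt_of_lt_neg_mul hWB hB (hμ P hP.le) hprice hP
  refine ⟨hstrict, fun P hP _ => ?_⟩
  rcases hP.eq_or_lt with rfl | hP
  · simp
  · linarith [hstrict P hP]

theorem stmt_16
    (W E Γ δ₁ gmax V ξ η c Pmax : ℝ)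
    (hW0 : 0 ≤ W) (hc : 0 ≤ c) (hWle : W ≤ max (gmax * V - c) 0)
    (hgmax : 0 ≤ gmax) (hV : 0 ≤ V) (hδ₁ : 0 ≤ δ₁)
    (hξ : 0 < ξ) (hη : 0 < η)
    (μ : ℝ → ℝ)
    (hμ : ∀ P : ℝ, 0 ≤ P → 0 ≤ μ P - μ 0 ∧ μ P - μ 0 ≤ δ₁ * P)
    (hE : E < Γ - (ξ / η) * δ₁ * gmax * V) :
    (∀ P : ℝ, 0 < P → W * μ P + (η / ξ) * (E - Γ) * P < W * μ 0) ∧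
    (∀ P : ℝ, 0 ≤ P → P ≤ Pmax →
      W * μ P + (η / ξ) * (E - Γ) * P ≤ W * μ 0 + (η / ξ) * (E - Γ) * 0) :=
  stmt_16_general W E Γ δ₁ gmax V ξ η c Pmax hc hWle hgmax hV hξ hη μ hμ hE
end
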